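/- In the complex simple Lie algebra 𝔤₂ of type G₂, let h = 2h_α + 3h_β, where h_α and h_β are the coroots of the short simple root α and the long simple root β respectively (so that α(h) = 1 and β(h) = 0). Then there exist elements e and f of 𝔤₂ such that (h, e, f) is an sl₂-triple, i.e. [h, e] = 2e, [h, f] = −2f, and [e, f] = h, with e ≠ 0. -/

import Mathlib

/-! Since `α(h) = 1` and `β(h) = 0`, the `h`-eigenvalue of a root vector is its `α`-coefficient,
so `e` has to span the root space of `2α + β`: take `e = ⁅eα, ⁅eα, eβ⁆⁆` and
`f = ¼ ⁅fα, ⁅fα, fβ⁆⁆`. The brackets with `h` follow from additivity of weights, and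
`⁅e, f⁆ = 4h` is a direct computation with the Serre relations. What is not formal is `e ≠ 0` in
the quotient of the free Lie algebra: it is detected by the 7-dimensional representation, where
the relations and the nonvanishing of `e` are identities between integer matrices. -/

open LieAlgebra CartanMatrix

namespace G2Orbit

/-- The canonical generators of `𝔤₂ = LieAlgebra.g₂ ℂ`, i.e. the images in the quotient of
the free Lie algebra of the generators `H i`, `E i`, `F i`. -/
noncomputable def gen (x : CartanMatrix.Generators (Fin 2)) : LieAlgebra.g₂ ℂ :=
  LieSubmodule.Quotient.mk (N := CartanMatrix.Relations.toIdeal ℂ CartanMatrix.G₂)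
    (FreeLieAlgebra.of ℂ x)

/-- The coroot `h_α` of the short simple root `α`.  (With Mathlib's convention
`CartanMatrix.G₂ = !![2, -3; -1, 2]` and `⁅H i, E j⁆ = G₂ i j • E j`, the short simple
root corresponds to the index `0`.) -/
noncomputable def hα : LieAlgebra.g₂ ℂ := gen (Generators.H 0)

/-- The coroot `h_β` of the long simple root `β` (index `1`). -/
noncomputable def hβ : LieAlgebra.g₂ ℂ := gen (Generators.H 1)

/-- The semisimple element `h = 2h_α + 3h_β` of the standard triple attached to the
8-dimensional nilpotent orbit of complex `G₂`; it satisfies `α(h) = 1` and `β(h) = 0`. -/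
noncomputable def h : LieAlgebra.g₂ ℂ := (2 : ℂ) • hα + (3 : ℂ) • hβ

end G2Orbit

theorem map_iterate_lie {L L' : Type*} [LieRing L] [LieRing L'] (f : L → L')
    (hf : ∀ x y, f ⁅x, y⁆ = ⁅f x, f y⁆) (x : L) (n : ℕ) (y : L) :
    f ((fun z => ⁅x, z⁆)^[n] y) = (fun z => ⁅f x, z⁆)^[n] (f y) :=
  Function.Semiconj.iterate_right (fun z => hf x z) n y

theorem lie_lie_eq_add_smul {R L : Type*} [CommRing R] [LieRing L] [LieAlgebra R L]
    {h x y : L} {s t : R} (hx : ⁅h, x⁆ = s • x) (hy : ⁅h, y⁆ = t • y) :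
    ⁅h, ⁅x, y⁆⁆ = (s + t) • ⁅x, y⁆ := by
  rw [leibniz_lie, hx, hy, smul_lie, lie_smul, add_smul]

namespace Matrix.ToLieAlgebra

variable {R B : Type*} [CommRing R] [DecidableEq B] {CM : Matrix B B ℤ}

variable (R CM) in
noncomputable def of (x : Generators B) : ToLieAlgebra R CM :=
  LieSubmodule.Quotient.mk (FreeLieAlgebra.of R x)

theorem mk_eq_zero_of_mem_toSet {x : FreeLieAlgebra R (Generators B)}
    (hx : x ∈ Relations.toSet R CM) : (LieSubmodule.Quotient.mk x : ToLieAlgebra R CM) = 0 :=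
  LieSubmodule.Quotient.mk_eq_zero'.mpr (LieSubmodule.subset_lieSpan hx)

theorem lie_of_H_of_E (i j : B) :
    ⁅of R CM (.H i), of R CM (.E j)⁆ = (CM i j : R) • of R CM (.E j) := by
  have hrel : (LieSubmodule.Quotient.mk (Relations.HE R CM (i, j)) : ToLieAlgebra R CM) = 0 :=
    mk_eq_zero_of_mem_toSet (.inl (.inl (.inl (.inr ⟨(i, j), rfl⟩))))
  rw [Int.cast_smul_eq_zsmul]
  exact sub_eq_zero.mp hrel

theorem lie_of_H_of_F (i j : B) :
    ⁅of R CM (.H i), of R CM (.F j)⁆ = -((CM i j : R) • of R CM (.F j)) := by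
  have hrel : (LieSubmodule.Quotient.mk (Relations.HF R CM (i, j)) : ToLieAlgebra R CM) = 0 :=
    mk_eq_zero_of_mem_toSet (.inl (.inl (.inr ⟨(i, j), rfl⟩)))
  rw [Int.cast_smul_eq_zsmul]
  exact eq_neg_of_add_eq_zero_left hrel

theorem lie_of_E_of_F_self (i : B) : ⁅of R CM (.E i), of R CM (.F i)⁆ = of R CM (.H i) := by
  have hrel : (LieSubmodule.Quotient.mk (Relations.EF R (i, i)) : ToLieAlgebra R CM) = 0 :=
    mk_eq_zero_of_mem_toSet (.inl (.inl (.inl (.inl (.inr ⟨(i, i), rfl⟩)))))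
  simp only [Relations.EF, Function.uncurry_apply_pair] at hrel
  exact sub_eq_zero.mp hrel

theorem lie_of_E_of_F_of_ne {i j : B} (hij : i ≠ j) : ⁅of R CM (.E i), of R CM (.F j)⁆ = 0 := by
  have hrel : (LieSubmodule.Quotient.mk (Relations.EF R (i, j)) : ToLieAlgebra R CM) = 0 :=
    mk_eq_zero_of_mem_toSet (.inl (.inl (.inl (.inl (.inr ⟨(i, j), rfl⟩)))))
  simp only [Relations.EF, Function.uncurry_apply_pair, if_neg hij] at hrel
  exact hrel

theorem toSet_subset_ker_lift {L : Type*} [LieRing L] [LieAlgebra R L] (ρ : Generators B → L)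
    (hHH : ∀ i j, ⁅ρ (.H i), ρ (.H j)⁆ = 0)
    (hEF : ∀ i j, ⁅ρ (.E i), ρ (.F j)⁆ = if i = j then ρ (.H i) else 0)
    (hHE : ∀ i j, ⁅ρ (.H i), ρ (.E j)⁆ = CM i j • ρ (.E j))
    (hHF : ∀ i j, ⁅ρ (.H i), ρ (.F j)⁆ = -(CM i j • ρ (.F j)))
    (hadE : ∀ i j, (fun x => ⁅ρ (.E i), x⁆)^[(-CM i j).toNat] ⁅ρ (.E i), ρ (.E j)⁆ = 0)
    (hadF : ∀ i j, (fun x => ⁅ρ (.F i), x⁆)^[(-CM i j).toNat] ⁅ρ (.F i), ρ (.F j)⁆ = 0) :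
    Relations.toSet R CM ⊆ (FreeLieAlgebra.lift R ρ).ker := by
  rintro _ (((((⟨⟨i, j⟩, rfl⟩ | ⟨⟨i, j⟩, rfl⟩) | ⟨⟨i, j⟩, rfl⟩) | ⟨⟨i, j⟩, rfl⟩) |
    ⟨⟨i, j⟩, rfl⟩) | ⟨⟨i, j⟩, rfl⟩) <;>
    simp only [Relations.HH, Relations.EF, Relations.HE, Relations.HF, Relations.adE,
      Relations.adF, Function.uncurry_apply_pair, Function.comp_apply, SetLike.mem_coe,
      LieHom.mem_ker]
  · simp [hHH]
  · split_ifs with hij <;> simp [hEF, hij]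
  · simp [hHE]
  · simp [hHF]
  · rw [Module.End.pow_apply]
    refine (map_iterate_lie _ (LieHom.map_lie (FreeLieAlgebra.lift R ρ))
      (FreeLieAlgebra.of R (.E i)) _ _).trans ?_
    simpa using hadE i j
  · rw [Module.End.pow_apply]
    refine (map_iterate_lie _ (LieHom.map_lie (FreeLieAlgebra.lift R ρ))
      (FreeLieAlgebra.of R (.F i)) _ _).trans ?_
    simpa using hadF i j

theorem mk_ne_zero_of_lift_ne_zero {L : Type*} [LieRing L] [LieAlgebra R L]
    {ρ : Generators B → L} (hρ : Relations.toSet R CM ⊆ (FreeLieAlgebra.lift R ρ).ker)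
    {x : FreeLieAlgebra R (Generators B)} (hx : FreeLieAlgebra.lift R ρ x ≠ 0) :
    (LieSubmodule.Quotient.mk x : ToLieAlgebra R CM) ≠ 0 := fun h0 =>
  hx ((LieSubmodule.lieSpan_le.mpr hρ) (LieSubmodule.Quotient.mk_eq_zero'.mp h0))

end Matrix.ToLieAlgebra

namespace G2Orbit

open Matrix.ToLieAlgebra

noncomputable def eα : g₂ ℂ := gen (.E 0)
noncomputable def eβ : g₂ ℂ := gen (.E 1)
noncomputable def fα : g₂ ℂ := gen (.F 0)
noncomputable def fβ : g₂ ℂ := gen (.F 1)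

theorem lie_gen_H_gen_E (i j : Fin 2) :
    ⁅gen (.H i), gen (.E j)⁆ = (G₂ i j : ℂ) • gen (.E j) :=
  lie_of_H_of_E i j

theorem lie_gen_H_gen_F (i j : Fin 2) :
    ⁅gen (.H i), gen (.F j)⁆ = -((G₂ i j : ℂ) • gen (.F j)) :=
  lie_of_H_of_F i j

theorem lie_hα_eα : ⁅hα, eα⁆ = (2 : ℂ) • eα := by
  rw [hα, eα, lie_gen_H_gen_E]; norm_num [G₂]

theorem lie_hα_eβ : ⁅hα, eβ⁆ = (-3 : ℂ) • eβ := by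
  rw [hα, eβ, lie_gen_H_gen_E]; norm_num [G₂]

theorem lie_hβ_eα : ⁅hβ, eα⁆ = (-1 : ℂ) • eα := by
  rw [hβ, eα, lie_gen_H_gen_E]; norm_num [G₂]

theorem lie_h_gen_E (j : Fin 2) :
    ⁅h, gen (.E j)⁆ = ((2 * G₂ 0 j + 3 * G₂ 1 j : ℤ) : ℂ) • gen (.E j) := by
  simp only [h, hα, hβ, add_lie, smul_lie, lie_gen_H_gen_E]
  push_cast
  module

theorem lie_h_gen_F (j : Fin 2) :
    ⁅h, gen (.F j)⁆ = -((2 * G₂ 0 j + 3 * G₂ 1 j : ℤ) : ℂ) • gen (.F j) := by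
  simp only [h, hα, hβ, add_lie, smul_lie, lie_gen_H_gen_F]
  push_cast
  module

theorem lie_h_eα : ⁅h, eα⁆ = (1 : ℂ) • eα := by rw [eα, lie_h_gen_E]; norm_num [G₂]

theorem lie_h_eβ : ⁅h, eβ⁆ = (0 : ℂ) • eβ := by rw [eβ, lie_h_gen_E]; norm_num [G₂]

theorem lie_h_fα : ⁅h, fα⁆ = (-1 : ℂ) • fα := by rw [fα, lie_h_gen_F]; norm_num [G₂]

theorem lie_h_fβ : ⁅h, fβ⁆ = (0 : ℂ) • fβ := by rw [fβ, lie_h_gen_F]; norm_num [G₂]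

noncomputable def eαβ : g₂ ℂ := ⁅eα, eβ⁆
noncomputable def eααβ : g₂ ℂ := ⁅eα, eαβ⁆
noncomputable def fαβ : g₂ ℂ := ⁅fα, fβ⁆
noncomputable def fααβ : g₂ ℂ := ⁅fα, fαβ⁆

theorem lie_h_eααβ : ⁅h, eααβ⁆ = (2 : ℂ) • eααβ := by
  have h_eαβ : ⁅h, eαβ⁆ = (1 + 0 : ℂ) • eαβ := lie_lie_eq_add_smul lie_h_eα lie_h_eβ
  rw [eααβ, lie_lie_eq_add_smul lie_h_eα h_eαβ]
  norm_num


theorem lie_h_fααβ : ⁅h, fααβ⁆ = (-2 : ℂ) • fααβ := by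
  have h_fαβ : ⁅h, fαβ⁆ = (-1 + 0 : ℂ) • fαβ := lie_lie_eq_add_smul lie_h_fα lie_h_fβ
  rw [fααβ, lie_lie_eq_add_smul lie_h_fα h_fαβ]
  norm_num

theorem lie_eα_fα : ⁅eα, fα⁆ = hα := lie_of_E_of_F_self 0

theorem lie_eβ_fβ : ⁅eβ, fβ⁆ = hβ := lie_of_E_of_F_self 1

theorem lie_eα_fβ : ⁅eα, fβ⁆ = 0 := lie_of_E_of_F_of_ne (by decide)

theorem lie_eβ_fα : ⁅eβ, fα⁆ = 0 := lie_of_E_of_F_of_ne (by decide)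

theorem lie_hα_eαβ : ⁅hα, eαβ⁆ = (-1 : ℂ) • eαβ := by
  rw [eαβ, lie_lie_eq_add_smul lie_hα_eα lie_hα_eβ]
  norm_num

theorem lie_fα_eαβ : ⁅fα, eαβ⁆ = (3 : ℂ) • eβ := by
  rw [eαβ, leibniz_lie, ← lie_skew fα eα, lie_eα_fα, ← lie_skew fα eβ, lie_eβ_fα, neg_lie,
    lie_hα_eβ]
  simp

theorem lie_fβ_eαβ : ⁅fβ, eαβ⁆ = -eα := by
  rw [eαβ, leibniz_lie, ← lie_skew fβ eα, lie_eα_fβ, ← lie_skew fβ eβ, lie_eβ_fβ, lie_neg,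
    ← lie_skew eα hβ, lie_hβ_eα]
  simp

theorem lie_fα_eααβ : ⁅fα, eααβ⁆ = (4 : ℂ) • eαβ := by
  rw [eααβ, leibniz_lie, ← lie_skew fα eα, lie_eα_fα, lie_fα_eαβ, neg_lie, lie_hα_eαβ, lie_smul,
    ← eαβ]
  module

theorem lie_fβ_eααβ : ⁅fβ, eααβ⁆ = 0 := by
  rw [eααβ, leibniz_lie, ← lie_skew fβ eα, lie_eα_fβ, lie_fβ_eαβ]
  simp

theorem lie_eααβ_fααβ : ⁅eααβ, fααβ⁆ = (4 : ℂ) • h := by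
  have eααβ_fαβ : ⁅eααβ, fαβ⁆ = (-4 : ℂ) • eα := by
    rw [fαβ, leibniz_lie, ← lie_skew eααβ fα, lie_fα_eααβ, ← lie_skew eααβ fβ, lie_fβ_eααβ,
      neg_zero, lie_zero, add_zero, neg_lie, smul_lie, ← lie_skew eαβ fβ, lie_fβ_eαβ]
    module
  have eαβ_fαβ : ⁅eαβ, fαβ⁆ = -hα - (3 : ℂ) • hβ := by
    rw [fαβ, leibniz_lie, ← lie_skew eαβ fα, lie_fα_eαβ, ← lie_skew eαβ fβ, lie_fβ_eαβ, neg_lie,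
      smul_lie, lie_eβ_fβ, neg_neg, ← lie_skew fα eα, lie_eα_fα]
    module
  rw [fααβ, leibniz_lie, ← lie_skew eααβ fα, lie_fα_eααβ, eααβ_fαβ, neg_lie, smul_lie, eαβ_fαβ,
    lie_smul, ← lie_skew fα eα, lie_eα_fα, h]
  module

section Rep₇

attribute [local instance 100] LieRing.ofAssociativeRing

/-- The 7-dimensional representation of `𝔤₂`, in a basis of weight vectors of weights
`2α + β, α + β, α, 0, -α, -α - β, -2α - β`. -/
def rep₇ : Generators (Fin 2) → Matrix (Fin 7) (Fin 7) ℤ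
  | .E i => ![!![0,1,0,0,0,0,0; 0,0,0,0,0,0,0; 0,0,0,2,0,0,0; 0,0,0,0,1,0,0;
      0,0,0,0,0,0,0; 0,0,0,0,0,0,1; 0,0,0,0,0,0,0],
    !![0,0,0,0,0,0,0; 0,0,1,0,0,0,0; 0,0,0,0,0,0,0; 0,0,0,0,0,0,0;
      0,0,0,0,0,1,0; 0,0,0,0,0,0,0; 0,0,0,0,0,0,0]] i
  | .F i => ![!![0,0,0,0,0,0,0; 1,0,0,0,0,0,0; 0,0,0,0,0,0,0; 0,0,1,0,0,0,0;
      0,0,0,2,0,0,0; 0,0,0,0,0,0,0; 0,0,0,0,0,1,0],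
    !![0,0,0,0,0,0,0; 0,0,0,0,0,0,0; 0,1,0,0,0,0,0; 0,0,0,0,0,0,0;
      0,0,0,0,0,0,0; 0,0,0,0,1,0,0; 0,0,0,0,0,0,0]] i
  | .H i => ![!![1,0,0,0,0,0,0; 0,-1,0,0,0,0,0; 0,0,2,0,0,0,0; 0,0,0,0,0,0,0;
      0,0,0,0,-2,0,0; 0,0,0,0,0,1,0; 0,0,0,0,0,0,-1],
    !![0,0,0,0,0,0,0; 0,1,0,0,0,0,0; 0,0,-1,0,0,0,0; 0,0,0,0,0,0,0;
      0,0,0,0,1,0,0; 0,0,0,0,0,-1,0; 0,0,0,0,0,0,0]] i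

noncomputable def intCast₇ : Matrix (Fin 7) (Fin 7) ℤ →ₗ⁅ℤ⁆ Matrix (Fin 7) (Fin 7) ℂ :=
  (Int.castRingHom ℂ).mapMatrix.toIntAlgHom.toLieHom

theorem intCast₇_injective : Function.Injective intCast₇ :=
  Matrix.map_injective Int.cast_injective

theorem toSet_subset_ker_lift_rep₇ :
    Relations.toSet ℂ G₂ ⊆ (FreeLieAlgebra.lift ℂ (intCast₇ ∘ rep₇)).ker := by
  have hHH : ∀ i j, ⁅rep₇ (.H i), rep₇ (.H j)⁆ = 0 := by decide
  have hEF : ∀ i j, ⁅rep₇ (.E i), rep₇ (.F j)⁆ = if i = j then rep₇ (.H i) else 0 := by decide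
  have hHE : ∀ i j, ⁅rep₇ (.H i), rep₇ (.E j)⁆ = G₂ i j • rep₇ (.E j) := by decide
  have hHF : ∀ i j, ⁅rep₇ (.H i), rep₇ (.F j)⁆ = -(G₂ i j • rep₇ (.F j)) := by decide
  have hadE : ∀ i j,
      (fun x => ⁅rep₇ (.E i), x⁆)^[(-G₂ i j).toNat] ⁅rep₇ (.E i), rep₇ (.E j)⁆ = 0 := by decide
  have hadF : ∀ i j,
      (fun x => ⁅rep₇ (.F i), x⁆)^[(-G₂ i j).toNat] ⁅rep₇ (.F i), rep₇ (.F j)⁆ = 0 := by decide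
  have hiter := map_iterate_lie intCast₇ (LieHom.map_lie intCast₇)
  apply toSet_subset_ker_lift <;> intro i j <;> simp only [Function.comp_apply]
  · rw [← LieHom.map_lie, hHH, map_zero]
  · rw [← LieHom.map_lie, hEF]; split_ifs <;> simp
  · rw [← LieHom.map_lie, hHE, map_zsmul]
  · rw [← LieHom.map_lie, hHF, map_neg, map_zsmul]
  · rw [← LieHom.map_lie, ← hiter, hadE, map_zero]
  · rw [← LieHom.map_lie, ← hiter, hadF, map_zero]

theorem eααβ_ne_zero : eααβ ≠ 0 := by
  refine mk_ne_zero_of_lift_ne_zero toSet_subset_ker_lift_rep₇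
    (x := ⁅FreeLieAlgebra.of ℂ (Generators.E 0),
      ⁅FreeLieAlgebra.of ℂ (Generators.E 0), FreeLieAlgebra.of ℂ (Generators.E 1)⁆⁆) ?_
  simp only [LieHom.map_lie, FreeLieAlgebra.lift_of_apply, Function.comp_apply]
  rw [← LieHom.map_lie, ← LieHom.map_lie, ne_eq, map_eq_zero_iff _ intCast₇_injective]
  decide

end Rep₇

/-- There exist `e ≠ 0` and `f` in `𝔤₂` completing `h = 2h_α + 3h_β`
into an `sl₂`-triple: `[h, e] = 2e`, `[h, f] = −2f` and `[e, f] = h`. -/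
theorem exists_sl2_triple :
    ∃ e f : LieAlgebra.g₂ ℂ, e ≠ 0 ∧
      ⁅h, e⁆ = (2 : ℂ) • e ∧ ⁅h, f⁆ = (-2 : ℂ) • f ∧ ⁅e, f⁆ = h := by
  refine ⟨eααβ, (4 : ℂ)⁻¹ • fααβ, eααβ_ne_zero, lie_h_eααβ, ?_, ?_⟩
  · rw [lie_smul, lie_h_fααβ, smul_comm]
  · rw [lie_smul, lie_eααβ_fααβ, smul_smul, inv_mul_cancel₀ (by norm_num), one_smul]

end G2Orbit
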